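/- Let f : U → Y be differentiable with ‖f(x₀)‖ ≤ η, λ(Df(x₀)) ≥ ν > 0, and ‖Df(x) − Df(y)‖ ≤ K‖x − y‖ on B̄(x₀,R) ⊆ U. If 0 < d ≤ ν/K and g_d(t) = (η + νd) − (ν + Kd)t + (3K/2)t² has smallest real root t* ≤ R, then f has a unique zero x* ∈ B̄(x₀, t*), and any inexact Newton sequence x_{k+1} = x_k − Df(x_k)⁻¹f(x_k) + r_k with ‖r_k‖ ≤ d stays in B̄(x₀, t*) and satisfies ‖x* − x_{k+1}‖ ≤ (√3/2)Kν⁻¹‖x* − x_k‖² + ‖r_k‖. -/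

import Mathlib

/-!
On `closedBall x₀ t` the derivative stays within `K t` of `f' x₀`, whose bijectivity modulus is
at least `ν`; since `K t < ν`, a Neumann series makes every `f' p` invertible with
`‖f' p x‖ ≥ (ν - K t) ‖x‖`. The same bound says that `f` approximates the linear map `f' x₀`
within `K t` on the ball, so the contraction argument behind the inverse function theorem yields
a unique zero there as soon as `‖f x₀‖ ≤ (ν - K t) t`.

For the iteration, the quadratic Taylor bound `‖f q - f p - f' p (q - p)‖ ≤ K / 2 ‖q - p‖²`
turns a Newton step `N p = p - (f' p)⁻¹ (f p)` into
`(ν - K t) ‖q - N p‖ ≤ ‖f q‖ + K / 2 ‖q - p‖²` for every `q` in the ball. Taking `q = x₀` and the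
root identity `η + K t² / 2 = (ν - K t) (t - d)` keeps the iterates in the ball; taking `q = x*`
gives the error estimate, because the smallest root satisfies `ν - K t ≥ ν / √3`.
-/

open Metric Set

open scoped NNReal

open scoped Classical in
/-- The bijectivity modulus of a bounded linear operator: `‖F⁻¹‖⁻¹` if `F` is
invertible with bounded inverse, and `0` otherwise. -/
noncomputable def bijMod {X Y : Type*} [NormedAddCommGroup X] [NormedSpace ℝ X]
    [NormedAddCommGroup Y] [NormedSpace ℝ Y] (F : X →L[ℝ] Y) : ℝ :=
  if h : ∃ e : X ≃L[ℝ] Y, (e : X →L[ℝ] Y) = F then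
    ‖(h.choose.symm : Y →L[ℝ] X)‖⁻¹
  else 0

/-- The majorant `g_d` of the paper. -/
noncomputable def newtonMajorant (η K ν d s : ℝ) : ℝ :=
  (η + ν * d) - (ν + K * d) * s + 3 * K / 2 * s ^ 2

section NewtonMajorant

variable {η K ν d t : ℝ}

lemma pos_of_newtonMajorant_eq_zero (hη : 0 ≤ η) (hK : 0 < K) (hν : 0 < ν) (hd : 0 < d)
    (hroot : newtonMajorant η K ν d t = 0) : 0 < t := by
  unfold newtonMajorant at hroot
  by_contra! h
  nlinarith [mul_pos hν hd, mul_nonneg (by positivity : 0 ≤ ν + K * d) (neg_nonneg.mpr h)]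

/-- The roots are symmetric about the vertex `(ν + K d) / (3 K)`, so the smallest one lies
to its left. -/
lemma three_mul_le_of_isLeast_root (hK : 0 < K) (hroot : newtonMajorant η K ν d t = 0)
    (hsmallest : ∀ s, newtonMajorant η K ν d s = 0 → t ≤ s) :
    3 * K * t ≤ ν + K * d := by
  have hmirror := hsmallest (2 * (ν + K * d) / (3 * K) - t) (by
    unfold newtonMajorant at hroot ⊢
    field_simp
    linear_combination (6 * K) * hroot)
  have : 2 * t ≤ 2 * (ν + K * d) / (3 * K) := by linarith
  rw [le_div_iff₀ (by positivity)] at this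
  linarith

/-- A real root forces the discriminant `(ν + K d)² - 6 K (η + ν d)` to be nonnegative;
with `K d ≤ ν` this pins `K d / ν` below the smaller root `2 - √3` of `a² - 4a + 1`. -/
lemma mul_le_two_sub_sqrt_three_mul (hη : 0 ≤ η) (hK : 0 < K) (hν : 0 < ν) (hKd : K * d ≤ ν)
    (hroot : newtonMajorant η K ν d t = 0) : K * d ≤ (2 - √3) * ν := by
  unfold newtonMajorant at hroot
  have hdisc : 3 * ν ^ 2 ≤ (2 * ν - K * d) ^ 2 := by
    nlinarith [sq_nonneg (ν + K * d - 3 * K * t), mul_nonneg hK.le hη]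
  have : √3 * ν ≤ 2 * ν - K * d := by
    apply abs_le_of_sq_le_sq' _ (by linarith) |>.2
    rwa [mul_pow, Real.sq_sqrt (by norm_num)]
  linarith

lemma div_sqrt_three_le_sub_mul (hη : 0 ≤ η) (hK : 0 < K) (hν : 0 < ν) (hdν : d ≤ ν / K)
    (hroot : newtonMajorant η K ν d t = 0)
    (hsmallest : ∀ s, newtonMajorant η K ν d s = 0 → t ≤ s) : ν / √3 ≤ ν - K * t := by
  have hKd : K * d ≤ ν := by rwa [le_div_iff₀ hK, mul_comm] at hdν
  have hvertex := three_mul_le_of_isLeast_root hK hroot hsmallest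
  have hdisc := mul_le_two_sub_sqrt_three_mul hη hK hν hKd hroot
  have h3 : √3 * √3 = 3 := Real.mul_self_sqrt (by norm_num)
  rw [div_le_iff₀ (by positivity)]
  nlinarith [Real.sqrt_nonneg 3]

end NewtonMajorant

section NormedSpace

variable {X Y : Type*} [NormedAddCommGroup X] [NormedSpace ℝ X]
  [NormedAddCommGroup Y] [NormedSpace ℝ Y]

lemma isInvertible_of_le_bijMod {F : X →L[ℝ] Y} {ν : ℝ} (hν : 0 < ν) (h : ν ≤ bijMod F) :
    F.IsInvertible ∧ ∀ x, ν * ‖x‖ ≤ ‖F x‖ := by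
  unfold bijMod at h
  split_ifs at h with hF
  · refine ⟨hF, fun x => ?_⟩
    set e := hF.choose
    have hN : ‖(e.symm : Y →L[ℝ] X)‖ * ν ≤ 1 :=
      mul_le_of_le_inv_mul₀ zero_le_one (norm_nonneg _) (by simpa using h)
    have hx : x = e.symm (F x) := by rw [← hF.choose_spec]; simp [e]
    calc ν * ‖x‖ ≤ ν * (‖(e.symm : Y →L[ℝ] X)‖ * ‖F x‖) := by
          gcongr
          conv_lhs => rw [hx]
          exact (e.symm : Y →L[ℝ] X).le_opNorm _
      _ ≤ ‖F x‖ := by nlinarith [norm_nonneg (F x)]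
  · linarith

lemma ContinuousLinearMap.le_norm_apply_of_norm_sub_le {A B : X →L[ℝ] Y} {ν δ : ℝ}
    (hA : ∀ x, ν * ‖x‖ ≤ ‖A x‖) (hBA : ‖B - A‖ ≤ δ) (x : X) : (ν - δ) * ‖x‖ ≤ ‖B x‖ := by
  have : ‖A x‖ ≤ ‖B x‖ + δ * ‖x‖ := calc
    ‖A x‖ = ‖B x - (B - A) x‖ := by simp
    _ ≤ ‖B x‖ + ‖B - A‖ * ‖x‖ := (norm_sub_le _ _).trans (by gcongr; exact (B - A).le_opNorm x)
    _ ≤ ‖B x‖ + δ * ‖x‖ := by gcongr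
  linarith [hA x]

lemma ContinuousLinearEquiv.norm_symm_apply_le {e : X ≃L[ℝ] Y} {ν : ℝ} (hν : 0 < ν)
    (he : ∀ x, ν * ‖x‖ ≤ ‖e x‖) (y : Y) : ‖e.symm y‖ ≤ ν⁻¹ * ‖y‖ := by
  rw [le_inv_mul_iff₀ hν]
  simpa using he (e.symm y)

lemma ContinuousLinearMap.IsInvertible.of_norm_sub_lt [CompleteSpace X] {A B : X →L[ℝ] Y} {ν : ℝ}
    (hA : A.IsInvertible) (hν : ∀ x, ν * ‖x‖ ≤ ‖A x‖) (hBA : ‖B - A‖ < ν) : B.IsInvertible := by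
  obtain ⟨e, rfl⟩ := hA
  have hν0 : 0 < ν := (norm_nonneg _).trans_lt hBA
  set T : X →L[ℝ] X := (e.symm : Y →L[ℝ] X) ∘L ((e : X →L[ℝ] Y) - B)
  have hT : ‖T‖ < 1 := calc
    ‖T‖ ≤ ν⁻¹ * ‖(e : X →L[ℝ] Y) - B‖ := T.opNorm_le_bound (by positivity) fun x => calc
      ‖T x‖ ≤ ν⁻¹ * ‖((e : X →L[ℝ] Y) - B) x‖ := e.norm_symm_apply_le hν0 hν _
      _ ≤ ν⁻¹ * (‖(e : X →L[ℝ] Y) - B‖ * ‖x‖) := by gcongr; exact le_opNorm _ _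
      _ = _ := by ring
    _ < 1 := (inv_mul_lt_one₀ hν0).2 (by rwa [norm_sub_rev])
  obtain ⟨u, hu⟩ := isUnit_one_sub_of_norm_lt_one hT
  refine ⟨(ContinuousLinearEquiv.ofUnit u).trans e, ?_⟩
  ext x
  show e ((u : X →L[ℝ] X) x) = B x
  simp [hu, T]

theorem Convex.norm_image_sub_sub_le_of_lipschitz_fderiv {f : X → Y} {f' : X → X →L[ℝ] Y}
    {s : Set X} (hs : Convex ℝ s) (hder : ∀ z ∈ s, HasFDerivAt f (f' z) z) {K : ℝ}
    (hlip : ∀ z ∈ s, ∀ w ∈ s, ‖f' z - f' w‖ ≤ K * ‖z - w‖) {x y : X} (hx : x ∈ s) (hy : y ∈ s) :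
    ‖f y - f x - f' x (y - x)‖ ≤ K / 2 * ‖y - x‖ ^ 2 := by
  set v := y - x
  have hseg : ∀ τ ∈ Icc (0 : ℝ) 1, x + τ • v ∈ s := fun τ hτ => by
    simpa [v, sub_smul, smul_sub, add_sub, add_comm] using
      hs.add_smul_sub_mem hx hy hτ
  let φ : ℝ → Y := fun τ => f (x + τ • v) - f x - τ • f' x v
  have hφ : ∀ τ ∈ Icc (0 : ℝ) 1, HasDerivAt φ ((f' (x + τ • v) - f' x) v) τ := by
    intro τ hτ
    have hline : HasDerivAt (fun τ : ℝ => x + τ • v) v τ := by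
      simpa using ((hasDerivAt_id τ).smul_const v).const_add x
    exact ((((hder _ (hseg τ hτ)).comp_hasDerivAt τ hline).sub_const (f x)).sub
      ((hasDerivAt_id τ).smul_const (f' x v))).congr_deriv (by simp)
  have hbound : ∀ τ ∈ Ico (0 : ℝ) 1, ‖(f' (x + τ • v) - f' x) v‖ ≤ K * ‖v‖ ^ 2 * τ := by
    intro τ hτ
    calc ‖(f' (x + τ • v) - f' x) v‖ ≤ ‖f' (x + τ • v) - f' x‖ * ‖v‖ :=
          ContinuousLinearMap.le_opNorm _ _
      _ ≤ K * ‖τ • v‖ * ‖v‖ := by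
        gcongr
        simpa using hlip _ (hseg τ (Ico_subset_Icc_self hτ)) _ hx
      _ = K * ‖v‖ ^ 2 * τ := by rw [norm_smul, Real.norm_of_nonneg hτ.1]; ring
  have hB : ∀ τ, HasDerivAt (fun τ : ℝ => K * ‖v‖ ^ 2 / 2 * τ ^ 2) (K * ‖v‖ ^ 2 * τ) τ :=
    fun τ => ((hasDerivAt_pow 2 τ).const_mul _).congr_deriv (by norm_num; ring)
  have := image_norm_le_of_norm_deriv_right_le_deriv_boundary
    (fun τ hτ => (hφ τ hτ).continuousAt.continuousWithinAt)
    (fun τ hτ => (hφ τ (Ico_subset_Icc_self hτ)).hasDerivWithinAt) (by simp [φ]) hB hbound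
    (right_mem_Icc.2 zero_le_one)
  simp only [φ, one_smul, one_pow, mul_one, v, add_sub_cancel] at this
  linarith

theorem existsUnique_zero_of_approximatesLinearOn [CompleteSpace X] {f : X → Y}
    {A : X →L[ℝ] Y} {ν : ℝ} {c : ℝ≥0} (hA : A.IsInvertible) (hν : ∀ x, ν * ‖x‖ ≤ ‖A x‖)
    (hc : c < ν) {x₀ : X} {t : ℝ} (ht : 0 ≤ t) (hf : ApproximatesLinearOn f A (closedBall x₀ t) c)
    (hfx₀ : ‖f x₀‖ ≤ (ν - c) * t) : ∃! x, x ∈ closedBall x₀ t ∧ f x = 0 := by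
  obtain ⟨e, rfl⟩ := hA
  have hν0 : 0 < ν := c.2.trans_lt hc
  let g : (e : X →L[ℝ] Y).NonlinearRightInverse :=
    { toFun := e.symm
      nnnorm := ⟨ν⁻¹, by positivity⟩
      bound' := e.norm_symm_apply_le hν0 hν
      right_inv' := e.apply_symm_apply }
  obtain ⟨x, hx, hfx⟩ := hf.surjOn_closedBall_of_nonlinearRightInverse g ht subset_rfl (by
    rw [mem_closedBall, dist_zero_left]
    show ‖f x₀‖ ≤ ((ν⁻¹)⁻¹ - c) * t
    rwa [inv_inv])
  refine ⟨x, ⟨hx, hfx⟩, fun y ⟨hy, hfy⟩ => ?_⟩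
  have happrox := hf y hy x hx
  rw [hfx, hfy, sub_zero, zero_sub, norm_neg] at happrox
  have : (ν - c) * ‖y - x‖ ≤ 0 := by linarith [hν (y - x)]
  exact sub_eq_zero.1 (norm_le_zero_iff.1 (nonpos_of_mul_nonpos_right this (by linarith)))

lemma ContinuousLinearEquiv.mul_norm_sub_newton_le {e : X ≃L[ℝ] Y} {c : ℝ}
    (he : ∀ x, c * ‖x‖ ≤ ‖e x‖) (f : X → Y) (p q : X) :
    c * ‖q - (p - e.symm (f p))‖ ≤ ‖f q‖ + ‖f q - f p - e (q - p)‖ :=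
  calc c * ‖q - (p - e.symm (f p))‖ ≤ ‖e (q - (p - e.symm (f p)))‖ := he _
    _ = ‖f q - (f q - f p - e (q - p))‖ := by
      congr 1; simp only [map_sub, apply_symm_apply]; abel
    _ ≤ ‖f q‖ + ‖f q - f p - e (q - p)‖ := norm_sub_le _ _

theorem Convex.mul_norm_sub_inexactNewton_le {f : X → Y} {f' : X → X →L[ℝ] Y} {s : Set X}
    (hs : Convex ℝ s) (hder : ∀ z ∈ s, HasFDerivAt f (f' z) z) {K c : ℝ}
    (hlip : ∀ z ∈ s, ∀ w ∈ s, ‖f' z - f' w‖ ≤ K * ‖z - w‖) (hc : 0 ≤ c) {p p' q r : X}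
    (hp : p ∈ s) (hq : q ∈ s) (hinv : (f' p).IsInvertible) (hlow : ∀ x, c * ‖x‖ ≤ ‖f' p x‖)
    (hp' : ∀ e : X ≃L[ℝ] Y, (e : X →L[ℝ] Y) = f' p → p' = p - e.symm (f p) + r) :
    c * ‖q - p'‖ ≤ ‖f q‖ + K / 2 * ‖q - p‖ ^ 2 + c * ‖r‖ := by
  obtain ⟨e, he⟩ := hinv
  have htaylor := hs.norm_image_sub_sub_le_of_lipschitz_fderiv hder hlip hp hq
  rw [← he] at hlow htaylor
  rw [ContinuousLinearEquiv.coe_coe] at htaylor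
  have hnewton := e.mul_norm_sub_newton_le hlow f p q
  calc c * ‖q - p'‖ = c * ‖q - (p - e.symm (f p)) - r‖ := by rw [hp' e he, sub_add_eq_sub_sub]
    _ ≤ c * ‖q - (p - e.symm (f p))‖ + c * ‖r‖ := by
      rw [← mul_add]; gcongr; exact norm_sub_le _ _
    _ ≤ ‖f q‖ + K / 2 * ‖q - p‖ ^ 2 + c * ‖r‖ := by linarith

theorem Convex.norm_sub_inexactNewton_le_of_apply_eq_zero {f : X → Y} {f' : X → X →L[ℝ] Y}
    {s : Set X} (hs : Convex ℝ s) (hder : ∀ z ∈ s, HasFDerivAt f (f' z) z) {K c : ℝ}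
    (hlip : ∀ z ∈ s, ∀ w ∈ s, ‖f' z - f' w‖ ≤ K * ‖z - w‖) (hc : 0 < c) {p p' q r : X}
    (hp : p ∈ s) (hq : q ∈ s) (hinv : (f' p).IsInvertible) (hlow : ∀ x, c * ‖x‖ ≤ ‖f' p x‖)
    (hp' : ∀ e : X ≃L[ℝ] Y, (e : X →L[ℝ] Y) = f' p → p' = p - e.symm (f p) + r)
    (hfq : f q = 0) : ‖q - p'‖ ≤ c⁻¹ * (K / 2 * ‖q - p‖ ^ 2) + ‖r‖ := by
  have := hs.mul_norm_sub_inexactNewton_le hder hlip hc.le hp hq hinv hlow hp'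
  rw [hfq, norm_zero, zero_add] at this
  rw [← sub_le_iff_le_add, le_inv_mul_iff₀ hc]
  linarith

theorem existsUnique_zero_of_norm_fderiv_sub_le [CompleteSpace X] {f : X → Y}
    {f' : X → X →L[ℝ] Y} {x₀ : X} {t ν δ : ℝ}
    (hder : ∀ z ∈ closedBall x₀ t, HasFDerivAt f (f' z) z) (hinv₀ : (f' x₀).IsInvertible)
    (hlow₀ : ∀ x, ν * ‖x‖ ≤ ‖f' x₀ x‖) (hdev : ∀ z ∈ closedBall x₀ t, ‖f' z - f' x₀‖ ≤ δ)
    (hδ : 0 ≤ δ) (hδν : δ < ν) (ht : 0 ≤ t) (hfx₀ : ‖f x₀‖ ≤ (ν - δ) * t) :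
    ∃! x, x ∈ closedBall x₀ t ∧ f x = 0 := by
  lift δ to ℝ≥0 using hδ
  exact existsUnique_zero_of_approximatesLinearOn hinv₀ hlow₀ hδν ht
    (fun _ hx _ hy => (convex_closedBall x₀ t).norm_image_sub_le_of_norm_hasFDerivWithin_le'
      (fun z hz => (hder z hz).hasFDerivWithinAt) hdev hy hx) hfx₀

theorem inexactNewton_mem_closedBall {f : X → Y} {f' : X → X →L[ℝ] Y} {x₀ : X} {t K c d : ℝ}
    (hder : ∀ z ∈ closedBall x₀ t, HasFDerivAt f (f' z) z)
    (hlip : ∀ z ∈ closedBall x₀ t, ∀ w ∈ closedBall x₀ t, ‖f' z - f' w‖ ≤ K * ‖z - w‖)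
    (hinv : ∀ p ∈ closedBall x₀ t, (f' p).IsInvertible)
    (hlow : ∀ p ∈ closedBall x₀ t, ∀ x, c * ‖x‖ ≤ ‖f' p x‖) (hK : 0 ≤ K) (hc : 0 < c)
    (ht : 0 ≤ t) (hfx₀ : ‖f x₀‖ + K / 2 * t ^ 2 ≤ c * (t - d)) {x rs : ℕ → X} (hx0 : x 0 = x₀)
    (hrs : ∀ k, ‖rs k‖ ≤ d)
    (hrec : ∀ k, ∀ ek : X ≃L[ℝ] Y, (ek : X →L[ℝ] Y) = f' (x k) →
      x (k + 1) = x k - ek.symm (f (x k)) + rs k) :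
    ∀ k, x k ∈ closedBall x₀ t := by
  intro k
  induction k with
  | zero => simpa [hx0] using ht
  | succ k ih =>
    have hstep := (convex_closedBall x₀ t).mul_norm_sub_inexactNewton_le hder hlip hc.le ih
      (mem_closedBall_self ht) (hinv _ ih) (hlow _ ih) (hrec k)
    have hxk : ‖x₀ - x k‖ ^ 2 ≤ t ^ 2 := by
      gcongr
      rw [← dist_eq_norm']
      exact ih
    rw [mem_closedBall, dist_eq_norm', ← mul_le_mul_iff_right₀ hc]
    nlinarith [hrs k]

end NormedSpace

theorem stmt_17_general
    {X Y : Type*} [NormedAddCommGroup X] [NormedSpace ℝ X] [CompleteSpace X]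
    [NormedAddCommGroup Y] [NormedSpace ℝ Y]
    (U : Set X) (f : X → Y) (f' : X → (X →L[ℝ] Y))
    (hf : ∀ x ∈ U, HasFDerivAt f (f' x) x)
    (x₀ : X) (R : ℝ)
    (hball : Metric.closedBall x₀ R ⊆ U)
    (η K ν d : ℝ) (hη : 0 ≤ η) (hK : 0 < K) (hν : 0 < ν)
    (hd : 0 < d) (hdν : d ≤ ν / K)
    (hfx₀ : ‖f x₀‖ ≤ η) (hmod : ν ≤ bijMod (f' x₀))
    (hLip : ∀ x ∈ Metric.closedBall x₀ R, ∀ y ∈ Metric.closedBall x₀ R,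
      ‖f' x - f' y‖ ≤ K * ‖x - y‖)
    (t : ℝ)
    (hroot : (η + ν * d) - (ν + K * d) * t + 3 * K / 2 * t ^ 2 = 0)
    (hsmallest : ∀ s : ℝ, (η + ν * d) - (ν + K * d) * s + 3 * K / 2 * s ^ 2 = 0 → t ≤ s)
    (htR : t ≤ R) :
    (∃! x : X, x ∈ Metric.closedBall x₀ t ∧ f x = 0) ∧
    (∀ (x rs : ℕ → X), x 0 = x₀ → (∀ k, ‖rs k‖ ≤ d) →
      (∀ k, ∀ ek : X ≃L[ℝ] Y, (ek : X →L[ℝ] Y) = f' (x k) →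
        x (k + 1) = x k - ek.symm (f (x k)) + rs k) →
      (∀ k, x k ∈ Metric.closedBall x₀ t) ∧
      ∀ xstar : X, xstar ∈ Metric.closedBall x₀ t → f xstar = 0 →
        ∀ k, ‖xstar - x (k + 1)‖ ≤
          Real.sqrt 3 / 2 * K * ν⁻¹ * ‖xstar - x k‖ ^ 2 + ‖rs k‖) := by
  have ht : 0 < t := pos_of_newtonMajorant_eq_zero hη hK hν hd hroot
  have hνt := div_sqrt_three_le_sub_mul hη hK hν hdν hroot hsmallest
  have hc : 0 < ν - K * t := (by positivity : 0 < ν / √3).trans_le hνt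
  obtain ⟨hinv₀, hlow₀⟩ := isInvertible_of_le_bijMod hν hmod
  have hBR : closedBall x₀ t ⊆ closedBall x₀ R := closedBall_subset_closedBall htR
  have hder : ∀ z ∈ closedBall x₀ t, HasFDerivAt f (f' z) z := fun z hz => hf z (hball (hBR hz))
  have hlip : ∀ z ∈ closedBall x₀ t, ∀ w ∈ closedBall x₀ t, ‖f' z - f' w‖ ≤ K * ‖z - w‖ :=
    fun z hz w hw => hLip z (hBR hz) w (hBR hw)
  have hdev : ∀ z ∈ closedBall x₀ t, ‖f' z - f' x₀‖ ≤ K * t := fun z hz =>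
    (hlip z hz x₀ (mem_closedBall_self ht.le)).trans
      (by gcongr; exact mem_closedBall_iff_norm.1 hz)
  have hlow : ∀ p ∈ closedBall x₀ t, ∀ x, (ν - K * t) * ‖x‖ ≤ ‖f' p x‖ := fun p hp =>
    ContinuousLinearMap.le_norm_apply_of_norm_sub_le hlow₀ (hdev p hp)
  have hinv : ∀ p ∈ closedBall x₀ t, (f' p).IsInvertible := fun p hp =>
    hinv₀.of_norm_sub_lt hlow₀ ((hdev p hp).trans_lt (by linarith))
  have hfx₀' : ‖f x₀‖ + K / 2 * t ^ 2 ≤ (ν - K * t) * (t - d) := by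
    linear_combination hfx₀ + hroot
  refine ⟨existsUnique_zero_of_norm_fderiv_sub_le hder hinv₀ hlow₀ hdev (by positivity)
    (by linarith) ht.le (by nlinarith), fun x rs hx0 hrs hrec => ?_⟩
  have hmem := inexactNewton_mem_closedBall hder hlip hinv hlow hK.le hc ht.le hfx₀' hx0 hrs hrec
  refine ⟨hmem, fun xs hxs hfxs k => ?_⟩
  have hμ : (ν - K * t)⁻¹ ≤ √3 * ν⁻¹ := by
    simpa [inv_div, div_eq_mul_inv] using inv_anti₀ (by positivity) hνt
  calc ‖xs - x (k + 1)‖ ≤ (ν - K * t)⁻¹ * (K / 2 * ‖xs - x k‖ ^ 2) + ‖rs k‖ :=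
        (convex_closedBall x₀ t).norm_sub_inexactNewton_le_of_apply_eq_zero hder hlip hc
          (hmem k) hxs (hinv _ (hmem k)) (hlow _ (hmem k)) (hrec k) hfxs
    _ ≤ √3 * ν⁻¹ * (K / 2 * ‖xs - x k‖ ^ 2) + ‖rs k‖ := by gcongr
    _ = √3 / 2 * K * ν⁻¹ * ‖xs - x k‖ ^ 2 + ‖rs k‖ := by ring

theorem stmt_17
    {X Y : Type*} [NormedAddCommGroup X] [NormedSpace ℝ X] [CompleteSpace X]
    [NormedAddCommGroup Y] [NormedSpace ℝ Y] [CompleteSpace Y]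
    (U : Set X) (hU : IsOpen U) (f : X → Y) (f' : X → (X →L[ℝ] Y))
    (hf : ∀ x ∈ U, HasFDerivAt f (f' x) x)
    (x₀ : X) (hx₀ : x₀ ∈ U) (R : ℝ) (hR : 0 < R)
    (hball : Metric.closedBall x₀ R ⊆ U)
    (η K ν d : ℝ) (hη : 0 ≤ η) (hK : 0 < K) (hν : 0 < ν)
    (hd : 0 < d) (hdν : d ≤ ν / K)
    (hfx₀ : ‖f x₀‖ ≤ η) (hmod : ν ≤ bijMod (f' x₀))
    (hLip : ∀ x ∈ Metric.closedBall x₀ R, ∀ y ∈ Metric.closedBall x₀ R,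
      ‖f' x - f' y‖ ≤ K * ‖x - y‖)
    (t : ℝ)
    (hroot : (η + ν * d) - (ν + K * d) * t + 3 * K / 2 * t ^ 2 = 0)
    (hsmallest : ∀ s : ℝ, (η + ν * d) - (ν + K * d) * s + 3 * K / 2 * s ^ 2 = 0 → t ≤ s)
    (htR : t ≤ R) :
    (∃! x : X, x ∈ Metric.closedBall x₀ t ∧ f x = 0) ∧
    (∀ (x rs : ℕ → X), x 0 = x₀ → (∀ k, ‖rs k‖ ≤ d) →
      (∀ k, ∀ ek : X ≃L[ℝ] Y, (ek : X →L[ℝ] Y) = f' (x k) →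
        x (k + 1) = x k - ek.symm (f (x k)) + rs k) →
      (∀ k, x k ∈ Metric.closedBall x₀ t) ∧
      ∀ xstar : X, xstar ∈ Metric.closedBall x₀ t → f xstar = 0 →
        ∀ k, ‖xstar - x (k + 1)‖ ≤
          Real.sqrt 3 / 2 * K * ν⁻¹ * ‖xstar - x k‖ ^ 2 + ‖rs k‖) :=
  stmt_17_general U f f' hf x₀ R hball η K ν d hη hK hν hd hdν hfx₀ hmod hLip t hroot hsmallest htR
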